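/- There is an absolute constant C > 0 such that for every weight w ∈ A₂^d and every dyadic interval J, (1/|J|) Σ_{I∈D(J)} ((m_{I⁺}w − m_{I⁻}w)/m_I w)² · |I| · (m_I w)^{1/4} (m_I w⁻¹)^{1/4} ≤ C · (m_J w)^{1/4} (m_J w⁻¹)^{1/4}. -/

import Mathlib

open MeasureTheory Set

noncomputable section

/-- The dyadic interval `[k 2^{-j}, (k+1) 2^{-j})`, indexed by `I = (j, k)`. -/
def dyadicI (I : ℤ × ℤ) : Set ℝ :=
  Set.Ico ((I.2 : ℝ) * 2 ^ (-I.1)) (((I.2 : ℝ) + 1) * 2 ^ (-I.1))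

/-- The length `|I| = 2^{-j}` of the dyadic interval indexed by `I = (j, k)`. -/
def len (I : ℤ × ℤ) : ℝ := 2 ^ (-I.1)

/-- The left half `I⁺` of the dyadic interval `I`. -/
def leftHalf (I : ℤ × ℤ) : ℤ × ℤ := (I.1 + 1, 2 * I.2)

/-- The right half `I⁻` of the dyadic interval `I`. -/
def rightHalf (I : ℤ × ℤ) : ℤ × ℤ := (I.1 + 1, 2 * I.2 + 1)

/-- The average `m_I f = (1/|I|) ∫_I f`. -/
def avg (f : ℝ → ℝ) (I : ℤ × ℤ) : ℝ := (len I)⁻¹ * ∫ x in dyadicI I, f x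

/-- The Haar function `h_I = |I|^{-1/2} (χ_{I⁺} - χ_{I⁻})`. -/
def haar (I : ℤ × ℤ) (x : ℝ) : ℝ :=
  (Real.sqrt (len I))⁻¹ *
    ((dyadicI (leftHalf I)).indicator (fun _ => (1 : ℝ)) x -
      (dyadicI (rightHalf I)).indicator (fun _ => (1 : ℝ)) x)

/-- The Haar coefficient `b_I = ⟨b, h_I⟩`. -/
def haarCoef (b : ℝ → ℝ) (I : ℤ × ℤ) : ℝ := ∫ x, b x * haar I x

/-- The dyadic BMO norm of `b`. -/
def bmoNorm (b : ℝ → ℝ) : ℝ :=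
  Real.sqrt (⨆ I : ℤ × ℤ, (len I)⁻¹ * ∫ x in dyadicI I, (b x - avg b I) ^ 2)

/-- The `A₂^d` characteristic `‖w‖_{A₂^d} = sup_I (m_I w)(m_I w⁻¹)`. -/
def A2const (w : ℝ → ℝ) : ℝ :=
  ⨆ I : ℤ × ℤ, avg w I * avg (fun x => (w x)⁻¹) I

/-!
The Bellman function `B(u, v) = (uv)^{1/4}` satisfies, for `u = (u₁ + u₂)/2`, `v = (v₁ + v₂)/2`,
`((u₁ - u₂)/u)² B(u, v) ≤ 64 (B(u, v) - (B(u₁, v₁) + B(u₂, v₂))/2)`: after normalising `u = v = 1`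
this is the AM-GM bound `(ac)^{1/4} ≤ (√a + √c)/2` combined with the strict concavity estimate
`√a + √b ≤ 2 - (a - b)²/16` for `a + b = 2`. Hence each summand is at most `64` times the defect
`Φ(I) - Φ(I⁺) - Φ(I⁻)` of `Φ(I) = |I| B(m_I w, m_I w⁻¹)`, and since `Φ ≥ 0` the defects of the
dyadic subintervals of `J` add up to at most `Φ(J)`.
-/

lemma Finset.sum_union_le_of_nonneg {ι : Type*} [DecidableEq ι] {s t : Finset ι} {f : ι → ℝ}
    (hf : ∀ i ∈ s ∩ t, 0 ≤ f i) : ∑ i ∈ s ∪ t, f i ≤ ∑ i ∈ s, f i + ∑ i ∈ t, f i := by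
  rw [← Finset.sum_union_inter]
  linarith [Finset.sum_nonneg hf]

namespace Dyadic

lemma len_pos (I : ℤ × ℤ) : 0 < len I := by unfold len; positivity

lemma len_leftHalf (I : ℤ × ℤ) : len (leftHalf I) = len I / 2 := by
  simp only [len, leftHalf, neg_add, zpow_add₀ (two_ne_zero (α := ℝ)), zpow_neg_one,
    div_eq_mul_inv]

lemma len_rightHalf (I : ℤ × ℤ) : len (rightHalf I) = len I / 2 := by
  simp only [len, rightHalf, neg_add, zpow_add₀ (two_ne_zero (α := ℝ)), zpow_neg_one,
    div_eq_mul_inv]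

lemma dyadicI_eq (I : ℤ × ℤ) : dyadicI I = Ico (I.2 * len I) ((I.2 + 1) * len I) := rfl

lemma dyadicI_leftHalf (I : ℤ × ℤ) :
    dyadicI (leftHalf I) = Ico (I.2 * len I) ((I.2 + 1 / 2) * len I) := by
  rw [dyadicI_eq, len_leftHalf]
  simp only [leftHalf]
  push_cast
  ring_nf

lemma dyadicI_rightHalf (I : ℤ × ℤ) :
    dyadicI (rightHalf I) = Ico ((I.2 + 1 / 2) * len I) ((I.2 + 1) * len I) := by
  rw [dyadicI_eq, len_rightHalf]
  simp only [rightHalf]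
  push_cast
  ring_nf

lemma dyadicI_leftHalf_union_rightHalf (I : ℤ × ℤ) :
    dyadicI (leftHalf I) ∪ dyadicI (rightHalf I) = dyadicI I := by
  have := len_pos I
  rw [dyadicI_leftHalf, dyadicI_rightHalf, dyadicI_eq]
  exact Ico_union_Ico_eq_Ico (by gcongr; norm_num) (by gcongr; norm_num)

lemma disjoint_dyadicI_leftHalf_rightHalf (I : ℤ × ℤ) :
    Disjoint (dyadicI (leftHalf I)) (dyadicI (rightHalf I)) := by
  rw [dyadicI_leftHalf, dyadicI_rightHalf]
  exact Ico_disjoint_Ico_same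

lemma integrableOn_dyadicI {f : ℝ → ℝ} (hf : LocallyIntegrable f volume) (I : ℤ × ℤ) :
    IntegrableOn f (dyadicI I) volume :=
  (hf.integrableOn_isCompact isCompact_Icc).mono_set Ico_subset_Icc_self

lemma avg_pos {f : ℝ → ℝ} (hf : ∀ x, 0 < f x) (hfi : LocallyIntegrable f volume)
    (I : ℤ × ℤ) : 0 < avg f I := by
  refine mul_pos (inv_pos.mpr (len_pos I)) ?_
  rw [setIntegral_pos_iff_support_of_nonneg_ae (.of_forall fun x => (hf x).le)
    (integrableOn_dyadicI hfi I), Function.support_eq_univ fun x => (hf x).ne', univ_inter,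
    dyadicI_eq, Real.volume_Ico, ENNReal.ofReal_pos]
  nlinarith [len_pos I]

lemma avg_eq_avg_halves {f : ℝ → ℝ} (hfi : LocallyIntegrable f volume) (I : ℤ × ℤ) :
    avg f I = (avg f (leftHalf I) + avg f (rightHalf I)) / 2 := by
  have hl := (len_pos I).ne'
  simp only [avg]
  rw [← dyadicI_leftHalf_union_rightHalf I, setIntegral_union
    (disjoint_dyadicI_leftHalf_rightHalf I) measurableSet_Ico (integrableOn_dyadicI hfi _)
    (integrableOn_dyadicI hfi _), len_leftHalf, len_rightHalf]
  field_simp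

/-- `tree J n` consists of the dyadic subintervals of `J` fewer than `n` generations below it. -/
def tree (J : ℤ × ℤ) : ℕ → Finset (ℤ × ℤ)
  | 0 => ∅
  | n + 1 => insert J (tree (leftHalf J) n ∪ tree (rightHalf J) n)

lemma mem_tree {I : ℤ × ℤ} (n : ℕ) :
    ∀ (J : ℤ × ℤ), I.1 = J.1 + n → J.2 * 2 ^ n ≤ I.2 → I.2 < (J.2 + 1) * 2 ^ n →
      ∀ N, n < N → I ∈ tree J N := by
  induction n with
  | zero =>
    rintro J h₁ h₂ h₃ (_ | N) hN
    · omega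
    · simp only [tree, Finset.mem_insert]
      left
      ext <;> simp_all; omega
  | succ n ih =>
    rintro J h₁ h₂ h₃ (_ | N) hN
    · omega
    simp only [tree, Finset.mem_insert, Finset.mem_union]
    right
    rw [pow_succ] at h₂ h₃
    by_cases h : I.2 < (2 * J.2 + 1) * 2 ^ n
    · left
      exact ih (leftHalf J) (by simp [leftHalf]; omega) (by simp [leftHalf]; linarith)
        (by simpa [leftHalf] using h) N (by omega)
    · right
      exact ih (rightHalf J) (by simp [rightHalf]; omega) (by simp [rightHalf]; linarith)
        (by simp [rightHalf]; linarith) N (by omega)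

lemma len_eq_pow_mul_len {I J : ℤ × ℤ} {n : ℕ} (h : I.1 = J.1 + n) :
    len J = 2 ^ n * len I := by
  rw [len, len, h, neg_add, zpow_add₀ (two_ne_zero (α := ℝ)), zpow_neg (2 : ℝ) n, zpow_natCast]
  field_simp

lemma exists_generation_of_dyadicI_subset {I J : ℤ × ℤ} (h : dyadicI I ⊆ dyadicI J) :
    ∃ n : ℕ, I.1 = J.1 + n ∧ J.2 * 2 ^ n ≤ I.2 ∧ I.2 < (J.2 + 1) * 2 ^ n := by
  have hI := len_pos I
  rw [dyadicI_eq, dyadicI_eq, Ico_subset_Ico_iff (by nlinarith)] at h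
  obtain ⟨hleft, hright⟩ := h
  have hlen : len I ≤ len J := by nlinarith
  have hj : J.1 ≤ I.1 := by
    rw [len, len] at hlen
    linarith [(zpow_le_zpow_iff_right₀ (by norm_num : (1:ℝ) < 2)).mp hlen]
  obtain ⟨n, hn⟩ := Int.eq_ofNat_of_zero_le (sub_nonneg.mpr hj)
  have hIJ : I.1 = J.1 + n := by omega
  rw [len_eq_pow_mul_len hIJ] at hleft hright
  refine ⟨n, hIJ, ?_, ?_⟩
  · have : (J.2 * 2 ^ n : ℝ) ≤ I.2 := le_of_mul_le_mul_right (by linarith) hI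
    exact_mod_cast this
  · have : (I.2 + 1 : ℝ) ≤ (J.2 + 1) * 2 ^ n := le_of_mul_le_mul_right (by linarith) hI
    exact_mod_cast this

lemma exists_subset_tree {J : ℤ × ℤ} {S : Finset (ℤ × ℤ)}
    (hS : ∀ I ∈ S, dyadicI I ⊆ dyadicI J) : ∃ N, S ⊆ tree J N := by
  refine ⟨S.sup (fun I => (I.1 - J.1).toNat) + 1, fun I hI => ?_⟩
  obtain ⟨n, h₁, h₂, h₃⟩ := exists_generation_of_dyadicI_subset (hS I hI)
  refine mem_tree n J h₁ h₂ h₃ _ (Nat.lt_succ_of_le ?_)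
  have := Finset.le_sup (f := fun I => (I.1 - J.1).toNat) hI
  simp only [h₁, add_sub_cancel_left, Int.toNat_natCast] at this
  exact this

section Telescoping

variable {Φ : ℤ × ℤ → ℝ}

lemma sum_tree_le (hΦ : ∀ I, 0 ≤ Φ I) (hΦ_super : ∀ I, Φ (leftHalf I) + Φ (rightHalf I) ≤ Φ I)
    (n : ℕ) :
    ∀ J, ∑ I ∈ tree J n, (Φ I - Φ (leftHalf I) - Φ (rightHalf I)) ≤ Φ J := by
  have hdefect : ∀ I, 0 ≤ Φ I - Φ (leftHalf I) - Φ (rightHalf I) :=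
    fun I => by linarith [hΦ_super I]
  induction n with
  | zero => exact fun J => by simpa [tree] using hΦ J
  | succ n ih =>
    intro J
    rw [tree, Finset.insert_eq]
    calc _ ≤ (Φ J - Φ (leftHalf J) - Φ (rightHalf J)) +
          ∑ I ∈ tree (leftHalf J) n ∪ tree (rightHalf J) n,
            (Φ I - Φ (leftHalf I) - Φ (rightHalf I)) :=
          (Finset.sum_union_le_of_nonneg fun I _ => hdefect I).trans_eq
            (by rw [Finset.sum_singleton])
      _ ≤ (Φ J - Φ (leftHalf J) - Φ (rightHalf J)) + (Φ (leftHalf J) + Φ (rightHalf J)) := by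
          gcongr
          exact (Finset.sum_union_le_of_nonneg fun I _ => hdefect I).trans
            (add_le_add (ih _) (ih _))
      _ = Φ J := by ring

lemma sum_le_of_forall_dyadicI_subset (hΦ : ∀ I, 0 ≤ Φ I)
    (hΦ_super : ∀ I, Φ (leftHalf I) + Φ (rightHalf I) ≤ Φ I) {J : ℤ × ℤ} {S : Finset (ℤ × ℤ)}
    (hS : ∀ I ∈ S, dyadicI I ⊆ dyadicI J) :
    ∑ I ∈ S, (Φ I - Φ (leftHalf I) - Φ (rightHalf I)) ≤ Φ J := by
  obtain ⟨N, hN⟩ := exists_subset_tree hS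
  exact (Finset.sum_le_sum_of_subset_of_nonneg hN fun I _ _ => by linarith [hΦ_super I]).trans
    (sum_tree_le hΦ hΦ_super N J)

end Telescoping

end Dyadic

namespace Bellman

def B (u v : ℝ) : ℝ := u ^ (1 / 4 : ℝ) * v ^ (1 / 4 : ℝ)

lemma B_pos {u v : ℝ} (hu : 0 < u) (hv : 0 < v) : 0 < B u v := by unfold B; positivity

lemma B_mul {u v a c : ℝ} (hu : 0 ≤ u) (hv : 0 ≤ v) (ha : 0 ≤ a) (hc : 0 ≤ c) :
    B (u * a) (v * c) = B u v * B a c := by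
  simp only [B, Real.mul_rpow hu ha, Real.mul_rpow hv hc]
  ring

lemma sqrt_add_sqrt_le {a b : ℝ} (ha : 0 ≤ a) (hb : 0 ≤ b) (hab : a + b = 2) :
    √a + √b ≤ 2 - (a - b) ^ 2 / 16 := by
  obtain ⟨x, hx, rfl⟩ : ∃ x, 0 ≤ x ∧ x ^ 2 = a := ⟨√a, Real.sqrt_nonneg a, Real.sq_sqrt ha⟩
  obtain ⟨y, hy, rfl⟩ : ∃ y, 0 ≤ y ∧ y ^ 2 = b := ⟨√b, Real.sqrt_nonneg b, Real.sq_sqrt hb⟩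
  rw [Real.sqrt_sq hx, Real.sqrt_sq hy]
  -- with `s = x + y`, `(x² - y²)² = s² (4 - s²)`, and the claim factors as
  -- `(2 - s)(16 - s²(2 + s)) ≥ 0`
  have key : 0 ≤ (x + y - 2) ^ 2 * ((x + y) ^ 2 + 4 * (x + y) + 8) := by positivity
  nlinarith [sq_nonneg (x - y), mul_nonneg hx hy]

lemma B_le_avg_sqrt {a c : ℝ} (ha : 0 ≤ a) (hc : 0 ≤ c) : B a c ≤ (√a + √c) / 2 := by
  have hsq : ∀ {t : ℝ}, 0 ≤ t → (t ^ (1 / 4 : ℝ)) ^ 2 = √t := fun ht => by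
    rw [← Real.rpow_natCast, ← Real.rpow_mul ht, Real.sqrt_eq_rpow]
    norm_num
  unfold B
  nlinarith [sq_nonneg (a ^ (1 / 4 : ℝ) - c ^ (1 / 4 : ℝ)), hsq ha, hsq hc]

lemma B_add_B_le {a b c d : ℝ} (ha : 0 ≤ a) (hb : 0 ≤ b) (hc : 0 ≤ c) (hd : 0 ≤ d)
    (hab : a + b = 2) (hcd : c + d = 2) : B a c + B b d ≤ 2 - (a - b) ^ 2 / 32 := by
  linarith [B_le_avg_sqrt ha hc, B_le_avg_sqrt hb hd, sqrt_add_sqrt_le ha hb hab,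
    sqrt_add_sqrt_le hc hd hcd, sq_nonneg (c - d)]

theorem sq_div_mul_B_le {u₁ u₂ v₁ v₂ : ℝ} (hu₁ : 0 < u₁) (hu₂ : 0 < u₂) (hv₁ : 0 < v₁)
    (hv₂ : 0 < v₂) :
    ((u₁ - u₂) / ((u₁ + u₂) / 2)) ^ 2 * B ((u₁ + u₂) / 2) ((v₁ + v₂) / 2) ≤
      64 * (B ((u₁ + u₂) / 2) ((v₁ + v₂) / 2) - (B u₁ v₁ + B u₂ v₂) / 2) := by
  set u := (u₁ + u₂) / 2
  set v := (v₁ + v₂) / 2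
  have hu : 0 < u := by positivity
  have hv : 0 < v := by positivity
  have hnorm : ∀ {t s : ℝ}, 0 < s → t = s * (t / s) := fun hs => by field_simp
  have hsplit : B u₁ v₁ + B u₂ v₂ = B u v * (B (u₁ / u) (v₁ / v) + B (u₂ / u) (v₂ / v)) := by
    conv_lhs => rw [hnorm (t := u₁) hu, hnorm (t := u₂) hu, hnorm (t := v₁) hv,
      hnorm (t := v₂) hv]
    rw [B_mul, B_mul, mul_add] <;> positivity
  have hnormalized := B_add_B_le (a := u₁ / u) (b := u₂ / u) (c := v₁ / v) (d := v₂ / v)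
    (by positivity) (by positivity) (by positivity) (by positivity)
    (by field_simp; ring) (by field_simp; ring)
  rw [hsplit]
  rw [← sub_div] at hnormalized
  nlinarith [B_pos hu hv]

end Bellman

namespace Dyadic

open Bellman

def lenMulB (f g : ℝ → ℝ) (I : ℤ × ℤ) : ℝ := len I * B (avg f I) (avg g I)

section Weights

variable {f g : ℝ → ℝ}

lemma lenMulB_pos (hf : ∀ x, 0 < f x) (hg : ∀ x, 0 < g x) (hfi : LocallyIntegrable f volume)
    (hgi : LocallyIntegrable g volume) (I : ℤ × ℤ) : 0 < lenMulB f g I :=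
  mul_pos (len_pos I) (B_pos (avg_pos hf hfi I) (avg_pos hg hgi I))

lemma sq_div_avg_mul_len_le_mul_defect (hf : ∀ x, 0 < f x) (hg : ∀ x, 0 < g x)
    (hfi : LocallyIntegrable f volume) (hgi : LocallyIntegrable g volume) (I : ℤ × ℤ) :
    ((avg f (leftHalf I) - avg f (rightHalf I)) / avg f I) ^ 2 * len I *
        avg f I ^ (1 / 4 : ℝ) * avg g I ^ (1 / 4 : ℝ) ≤
      64 * (lenMulB f g I - lenMulB f g (leftHalf I) - lenMulB f g (rightHalf I)) := by
  have hBellman := sq_div_mul_B_le (avg_pos hf hfi (leftHalf I)) (avg_pos hf hfi (rightHalf I))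
    (avg_pos hg hgi (leftHalf I)) (avg_pos hg hgi (rightHalf I))
  rw [← avg_eq_avg_halves hfi, ← avg_eq_avg_halves hgi] at hBellman
  have hdefect : lenMulB f g I - lenMulB f g (leftHalf I) - lenMulB f g (rightHalf I) =
      len I * (B (avg f I) (avg g I) -
        (B (avg f (leftHalf I)) (avg g (leftHalf I)) +
          B (avg f (rightHalf I)) (avg g (rightHalf I))) / 2) := by
    simp only [lenMulB, len_leftHalf, len_rightHalf]
    ring
  rw [hdefect]
  have := mul_le_mul_of_nonneg_left hBellman (len_pos I).le
  simp only [B] at this ⊢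
  linarith

lemma lenMulB_leftHalf_add_rightHalf_le (hf : ∀ x, 0 < f x) (hg : ∀ x, 0 < g x)
    (hfi : LocallyIntegrable f volume) (hgi : LocallyIntegrable g volume) (I : ℤ × ℤ) :
    lenMulB f g (leftHalf I) + lenMulB f g (rightHalf I) ≤ lenMulB f g I := by
  have := avg_pos hf hfi I
  have := avg_pos hg hgi I
  have := len_pos I
  linarith [(sq_div_avg_mul_len_le_mul_defect hf hg hfi hgi I).trans'
    (show (0 : ℝ) ≤ _ by positivity)]

end Weights

end Dyadic

open Dyadic Bellman in
/-- Proposition 2: for `w ∈ A₂^d`,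
`(1/|J|) Σ_{I∈D(J)} ((m_{I⁺}w − m_{I⁻}w)/m_I w)² |I| (m_I w)^{1/4} (m_I w⁻¹)^{1/4}
  ≤ C (m_J w)^{1/4} (m_J w⁻¹)^{1/4}`. -/
theorem prop_sum1
    : ∃ C : ℝ, 0 < C ∧ ∀ (w : ℝ → ℝ), (∀ x, 0 < w x) →
      LocallyIntegrable w volume →
      LocallyIntegrable (fun x => (w x)⁻¹) volume →
      BddAbove (Set.range fun I : ℤ × ℤ => avg w I * avg (fun x => (w x)⁻¹) I) →
      ∀ (J : ℤ × ℤ) (S : Finset (ℤ × ℤ)), (∀ I ∈ S, dyadicI I ⊆ dyadicI J) →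
        (len J)⁻¹ * ∑ I ∈ S,
            ((avg w (leftHalf I) - avg w (rightHalf I)) / avg w I) ^ 2 * len I *
              (avg w I) ^ ((1 : ℝ)/4) * (avg (fun x => (w x)⁻¹) I) ^ ((1 : ℝ)/4)
          ≤ C * (avg w J) ^ ((1 : ℝ)/4) * (avg (fun x => (w x)⁻¹) J) ^ ((1 : ℝ)/4) := by
  refine ⟨64, by norm_num, fun w hw hwi hvi _ J S hS => ?_⟩
  have hv : ∀ x, 0 < (w x)⁻¹ := fun x => inv_pos.mpr (hw x)
  set Φ := lenMulB w (fun x => (w x)⁻¹)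
  have hsum : ∑ I ∈ S, ((avg w (leftHalf I) - avg w (rightHalf I)) / avg w I) ^ 2 * len I *
        (avg w I) ^ ((1 : ℝ)/4) * (avg (fun x => (w x)⁻¹) I) ^ ((1 : ℝ)/4) ≤ 64 * Φ J :=
    calc _ ≤ ∑ I ∈ S, 64 * (Φ I - Φ (leftHalf I) - Φ (rightHalf I)) :=
          Finset.sum_le_sum fun I _ => sq_div_avg_mul_len_le_mul_defect hw hv hwi hvi I
      _ ≤ 64 * Φ J := by
          rw [← Finset.mul_sum]
          gcongr
          exact sum_le_of_forall_dyadicI_subset (fun I => (lenMulB_pos hw hv hwi hvi I).le)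
            (lenMulB_leftHalf_add_rightHalf_le hw hv hwi hvi) hS
  calc _ ≤ (len J)⁻¹ * (64 * Φ J) := by gcongr; exact (inv_pos.mpr (len_pos J)).le
    _ = _ := by
      simp only [Φ, lenMulB, B]
      field_simp [(len_pos J).ne']
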